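/- arXiv:2103.05340 — 3 statements merged into one kernel-verified Lean document; each statement's English description precedes it below -/
import Mathlib

section
/- Let d ≥ 2, N₂, N₄ > 0 with N₄ ≥ 2 N₃ for some N₃ > 0, and fix ξ ∈ ℝ^{d-1}, τ, ξ' ∈ ℝ and l̄ > 0. Fix an index i ∈ {1, …, d-1}. Then the function φ(ξ₃) = τ + |ξ - ξ₃|² + |ξ₃|² + ξ' satisfies: for any ξ₃ with |ξ₃| ≤ N₃ and |(ξ - ξ₃)_i| ≥ N₄, one has |∂_{ξ₃ᵢ} φ(ξ₃)| = |−2(ξ − ξ₃)ᵢ + 2ξ₃ᵢ| ≥ N₄. Consequently the Lebesgue measure of { ξ₃ ∈ ℝ^{d-1} : |φ(ξ₃)| ≤ l̄, |ξ₃| ≤ N₃, |(ξ−ξ₃)ᵢ| ≥ N₄ } is at most C N₄^{-1} N₃^{d-2} l̄ for a constant C depending only on d. -/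
open MeasureTheory

lemma eucl_norm_sq {n : ℕ} (x : EuclideanSpace ℝ (Fin n)) : ‖x‖ ^ 2 = ∑ j, (x j) ^ 2 := by
  rw [EuclideanSpace.norm_eq, Real.sq_sqrt (by positivity)]
  simp [Real.norm_eq_abs, sq_abs]

lemma eucl_coord_le {n : ℕ} (x : EuclideanSpace ℝ (Fin n)) (j : Fin n) : |x j| ≤ ‖x‖ := by
  rw [EuclideanSpace.norm_eq, ← Real.sqrt_sq (abs_nonneg (x j))]
  apply Real.sqrt_le_sqrt
  have := Finset.single_le_sum (f := fun k => ‖x k‖ ^ 2) (fun k _ => by positivity)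
    (Finset.mem_univ j)
  simpa [Real.norm_eq_abs, sq_abs] using this

lemma one_dir (N₃ N₄ lbar ξi K t t₀ : ℝ) (hN4 : 0 < N₄) (hsep : 2 * N₃ ≤ N₄)
    (ht : |(ξi - t) ^ 2 + t ^ 2 + K| ≤ lbar) (ht0 : |(ξi - t₀) ^ 2 + t₀ ^ 2 + K| ≤ lbar)
    (htN : |t| ≤ N₃) (ht0N : |t₀| ≤ N₃)
    (ha : N₄ ≤ |ξi - t|) (ha0 : N₄ ≤ |ξi - t₀|) :
    (t - t₀) * N₄ ≤ 2 * lbar := by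
  obtain ⟨ht1, ht2⟩ := abs_le.mp ht
  obtain ⟨ht01, ht02⟩ := abs_le.mp ht0
  obtain ⟨hb1, hb2⟩ := abs_le.mp htN
  obtain ⟨hb01, hb02⟩ := abs_le.mp ht0N
  rcases le_or_gt (t - t₀) 0 with hs | hs
  · nlinarith
  rcases le_abs.mp ha with h1 | h1 <;> rcases le_abs.mp ha0 with h2 | h2
  · have hp : 0 ≤ (t - t₀) * (ξi - t - t₀ - N₄ / 2) := mul_nonneg hs.le (by linarith)
    nlinarith
  · exfalso; linarith
  · exfalso; linarith
  · have hp : 0 ≤ (t - t₀) * (-(ξi - t - t₀) - N₄ / 2) := mul_nonneg hs.le (by linarith)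
    nlinarith

lemma aux_slice (m : ℕ) (i : Fin (m + 1)) (S : Set (Fin (m + 1) → ℝ)) (hS : MeasurableSet S)
    (N₃ c : ℝ) (hN : 0 ≤ N₃) (hc : 0 ≤ c)
    (hbox : ∀ x ∈ S, ∀ j, |x j| ≤ N₃)
    (hslice : ∀ y : Fin m → ℝ, volume {t : ℝ | i.insertNth t y ∈ S} ≤ ENNReal.ofReal c) :
    volume S ≤ ENNReal.ofReal (c * (2 * N₃) ^ m) := by
  have hmp := volume_preserving_piFinSuccAbove (fun _ : Fin (m + 1) => ℝ) i
  set e := MeasurableEquiv.piFinSuccAbove (fun _ : Fin (m + 1) => ℝ) i with he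
  have hSe : MeasurableSet (e.symm ⁻¹' S) := e.symm.measurable hS
  have h1 : volume S = (volume : Measure (ℝ × (Fin m → ℝ))) (e.symm ⁻¹' S) :=
    ((hmp.symm _).measure_preimage hS.nullMeasurableSet).symm
  rw [h1]
  have h2 : (volume : Measure (ℝ × (Fin m → ℝ))) = (volume : Measure ℝ).prod volume := rfl
  rw [h2, Measure.prod_apply_symm hSe]
  have hbM : MeasurableSet (Set.univ.pi fun _ : Fin m => Set.Icc (-N₃) N₃) :=
    MeasurableSet.univ_pi fun _ => measurableSet_Icc
  have hbound : ∀ y : Fin m → ℝ,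
      volume ((fun t => (t, y)) ⁻¹' (e.symm ⁻¹' S)) ≤
        (Set.univ.pi fun _ : Fin m => Set.Icc (-N₃) N₃).indicator
          (fun _ => ENNReal.ofReal c) y := by
    intro y
    have hset : (fun t => (t, y)) ⁻¹' (e.symm ⁻¹' S) = {t : ℝ | i.insertNth t y ∈ S} := by
      ext t
      simp [he, MeasurableEquiv.piFinSuccAbove_symm_apply, Fin.insertNthEquiv]
    rw [hset]
    by_cases hy : y ∈ Set.univ.pi fun _ : Fin m => Set.Icc (-N₃) N₃
    · rw [Set.indicator_of_mem hy]
      exact hslice y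
    · rw [Set.indicator_of_notMem hy]
      have : {t : ℝ | i.insertNth t y ∈ S} = ∅ := by
        ext t
        simp only [Set.mem_setOf_eq, Set.mem_empty_iff_false, iff_false]
        intro hmem
        apply hy
        intro j _
        have := hbox _ hmem (i.succAbove j)
        rw [Fin.insertNth_apply_succAbove] at this
        exact ⟨by linarith [(abs_le.mp this).1], (abs_le.mp this).2⟩
      simp [this]
  calc ∫⁻ y, volume ((fun t => (t, y)) ⁻¹' (e.symm ⁻¹' S)) ∂volume
      ≤ ∫⁻ y, (Set.univ.pi fun _ : Fin m => Set.Icc (-N₃) N₃).indicator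
          (fun _ => ENNReal.ofReal c) y ∂volume := lintegral_mono hbound
    _ = ENNReal.ofReal c * volume (Set.univ.pi fun _ : Fin m => Set.Icc (-N₃) N₃) :=
        lintegral_indicator_const hbM _
    _ ≤ ENNReal.ofReal (c * (2 * N₃) ^ m) := by
        rw [volume_pi_pi]
        simp only [Real.volume_Icc]
        rw [ENNReal.ofReal_mul hc, ENNReal.ofReal_pow (by linarith)]
        apply le_of_eq
        congr 1
        rw [Finset.prod_const, Finset.card_univ, Fintype.card_fin]
        congr 1
        rw [ENNReal.ofReal_eq_ofReal_iff (by linarith) (by linarith)]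
        ring

theorem main_aux (m : ℕ) :
    ∃ C : ℝ, 0 < C ∧ ∀ (N₃ N₄ : ℝ), 0 < N₃ → 0 < N₄ → 2 * N₃ ≤ N₄ →
      ∀ (ξ : EuclideanSpace ℝ (Fin (m + 1))) (τ ξ' lbar : ℝ), 0 < lbar →
        ∀ i : Fin (m + 1),
          (∀ ξ₃ : EuclideanSpace ℝ (Fin (m + 1)), ‖ξ₃‖ ≤ N₃ → N₄ ≤ |(ξ - ξ₃) i| →
            N₄ ≤ |(-2) * (ξ - ξ₃) i + 2 * ξ₃ i|) ∧
          volume {ξ₃ : EuclideanSpace ℝ (Fin (m + 1)) |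
              |τ + ‖ξ - ξ₃‖ ^ 2 + ‖ξ₃‖ ^ 2 + ξ'| ≤ lbar ∧ ‖ξ₃‖ ≤ N₃ ∧ N₄ ≤ |(ξ - ξ₃) i|} ≤
            ENNReal.ofReal (C * N₄⁻¹ * N₃ ^ m * lbar) := by
  refine ⟨2 ^ (m + 2), by positivity, ?_⟩
  intro N₃ N₄ hN3 hN4 hsep ξ τ ξ' lbar hl i
  constructor
  · intro ξ₃ h1 h2
    have h3 : |ξ₃ i| ≤ N₃ := le_trans (eucl_coord_le ξ₃ i) h1
    have h4 : 2 * |(ξ - ξ₃) i| - 2 * |ξ₃ i| ≤ |(-2) * (ξ - ξ₃) i + 2 * ξ₃ i| := by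
      have h5 := abs_sub_abs_le_abs_sub ((-2) * (ξ - ξ₃) i) ((-2) * ξ₃ i)
      have heq : (-2) * (ξ - ξ₃) i - (-2) * ξ₃ i = (-2) * (ξ - ξ₃) i + 2 * ξ₃ i := by ring
      rw [heq] at h5
      have habs : |(-2 : ℝ)| = 2 := by norm_num
      rw [abs_mul, abs_mul, habs] at h5
      linarith
    linarith
  · set S : Set (EuclideanSpace ℝ (Fin (m + 1))) :=
      {ξ₃ | |τ + ‖ξ - ξ₃‖ ^ 2 + ‖ξ₃‖ ^ 2 + ξ'| ≤ lbar ∧ ‖ξ₃‖ ≤ N₃ ∧ N₄ ≤ |(ξ - ξ₃) i|}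
      with hSdef
    have hproj : Measurable fun v : EuclideanSpace ℝ (Fin (m + 1)) => v i :=
      (measurable_pi_apply i).comp (MeasurableEquiv.toLp 2 (Fin (m + 1) → ℝ)).symm.measurable
    have hm1 : Measurable fun v : EuclideanSpace ℝ (Fin (m + 1)) =>
        |τ + ‖ξ - v‖ ^ 2 + ‖v‖ ^ 2 + ξ'| := by
      apply Measurable.abs
      apply Measurable.add _ measurable_const
      apply Measurable.add
      apply Measurable.add measurable_const
      · exact (((continuous_const.sub continuous_id).norm).pow 2).measurable
      · exact ((continuous_norm).pow 2).measurable
    have hm3 : Measurable fun v : EuclideanSpace ℝ (Fin (m + 1)) => |(ξ - v) i| := by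
      have : (fun v : EuclideanSpace ℝ (Fin (m + 1)) => (ξ - v) i)
          = fun v => ξ i - v i := by
        funext v; exact PiLp.sub_apply ..
      exact (show Measurable (fun v : EuclideanSpace ℝ (Fin (m + 1)) => (ξ - v) i) by rw [this]; exact measurable_const.sub hproj).abs
    have hSmeas : MeasurableSet S := by
      have : S = {v : EuclideanSpace ℝ (Fin (m + 1)) |
            |τ + ‖ξ - v‖ ^ 2 + ‖v‖ ^ 2 + ξ'| ≤ lbar} ∩
          ({v | ‖v‖ ≤ N₃} ∩ {v | N₄ ≤ |(ξ - v) i|}) := rfl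
      rw [this]
      exact (measurableSet_le hm1 measurable_const).inter
        ((measurableSet_le continuous_norm.measurable measurable_const).inter
          (measurableSet_le measurable_const hm3))
    set esymm := (MeasurableEquiv.toLp 2 (Fin (m + 1) → ℝ)).symm.symm with hesymm
    have hkey : volume S = volume (esymm ⁻¹' S) :=
      (((EuclideanSpace.volume_preserving_symm_measurableEquiv_toLp (Fin (m + 1))).symm _).measure_preimage
        hSmeas.nullMeasurableSet).symm
    rw [hkey]
    have hmeas' : MeasurableSet (esymm ⁻¹' S) := esymm.measurable hSmeas
    have hbox : ∀ x ∈ esymm ⁻¹' S, ∀ j, |x j| ≤ N₃ := by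
      intro x hx j
      have h := hx.2.1
      exact le_trans (eucl_coord_le (esymm x) j) h
    have hslice : ∀ y : Fin m → ℝ,
        volume {t : ℝ | i.insertNth t y ∈ esymm ⁻¹' S} ≤ ENNReal.ofReal (4 * lbar / N₄) := by
      intro y
      set T := {t : ℝ | i.insertNth t y ∈ esymm ⁻¹' S} with hT
      have hfact : ∀ t ∈ T,
          |(ξ i - t) ^ 2 + t ^ 2 + (τ + (∑ k, (y k) ^ 2) +
            (∑ k, (ξ (i.succAbove k) - y k) ^ 2) + ξ')| ≤ lbar ∧ |t| ≤ N₃ ∧ N₄ ≤ |ξ i - t| := by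
        intro t ht
        obtain ⟨hφ, hn, ha⟩ := ht
        have hv : ∀ j, (esymm (i.insertNth t y)) j = (i.insertNth (α := fun _ => ℝ) t y) j := fun _ => rfl
        have h1 : ‖esymm (i.insertNth t y)‖ ^ 2 = t ^ 2 + ∑ k, (y k) ^ 2 := by
          rw [eucl_norm_sq,
            Fin.sum_univ_succAbove (fun j => ((esymm (i.insertNth t y)) j) ^ 2) i]
          simp [hv, Fin.insertNth_apply_same, Fin.insertNth_apply_succAbove]
        have h2 : ‖ξ - esymm (i.insertNth t y)‖ ^ 2
            = (ξ i - t) ^ 2 + ∑ k, (ξ (i.succAbove k) - y k) ^ 2 := by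
          rw [eucl_norm_sq,
            Fin.sum_univ_succAbove (fun j => ((ξ - esymm (i.insertNth t y)) j) ^ 2) i]
          simp [PiLp.sub_apply, hv, Fin.insertNth_apply_same, Fin.insertNth_apply_succAbove]
        have h3 : (ξ - esymm (i.insertNth t y)) i = ξ i - t := by
          rw [PiLp.sub_apply]
          simp [hv, Fin.insertNth_apply_same]
        have h4 : |t| ≤ N₃ := by
          have := eucl_coord_le (esymm (i.insertNth t y)) i
          rw [hv i, Fin.insertNth_apply_same] at this
          exact le_trans this hn
        rw [h1, h2] at hφ
        rw [h3] at ha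
        refine ⟨?_, h4, ha⟩
        have : τ + ((ξ i - t) ^ 2 + ∑ k, (ξ (i.succAbove k) - y k) ^ 2)
            + (t ^ 2 + ∑ k, (y k) ^ 2) + ξ'
            = (ξ i - t) ^ 2 + t ^ 2 + (τ + (∑ k, (y k) ^ 2) +
              (∑ k, (ξ (i.succAbove k) - y k) ^ 2) + ξ') := by ring
        rw [this] at hφ
        exact hφ
      rcases Set.eq_empty_or_nonempty T with hTe | ⟨t₀, ht₀⟩
      · rw [hTe]; simp
      have hsubI : T ⊆ Set.Icc (t₀ - 2 * lbar / N₄) (t₀ + 2 * lbar / N₄) := by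
        intro t ht
        obtain ⟨hφ, h4, ha⟩ := hfact t ht
        obtain ⟨hφ0, h40, ha0⟩ := hfact t₀ ht₀
        have hd1 := one_dir N₃ N₄ lbar (ξ i) _ t t₀ hN4 hsep hφ hφ0 h4 h40 ha ha0
        have hd2 := one_dir N₃ N₄ lbar (ξ i) _ t₀ t hN4 hsep hφ0 hφ h40 h4 ha0 ha
        have hd1' : t - t₀ ≤ 2 * lbar / N₄ := (le_div_iff₀ hN4).mpr hd1
        have hd2' : t₀ - t ≤ 2 * lbar / N₄ := (le_div_iff₀ hN4).mpr hd2
        exact ⟨by linarith, by linarith⟩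
      calc volume T ≤ volume (Set.Icc (t₀ - 2 * lbar / N₄) (t₀ + 2 * lbar / N₄)) :=
            measure_mono hsubI
        _ = ENNReal.ofReal (t₀ + 2 * lbar / N₄ - (t₀ - 2 * lbar / N₄)) := Real.volume_Icc
        _ ≤ ENNReal.ofReal (4 * lbar / N₄) := by
            apply ENNReal.ofReal_le_ofReal
            rw [div_eq_mul_inv, div_eq_mul_inv]
            ring_nf
            linarith
    have hc4 : (0:ℝ) ≤ 4 * lbar / N₄ := by positivity
    refine le_trans (aux_slice m i _ hmeas' N₃ (4 * lbar / N₄) hN3.le hc4 hbox hslice) ?_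
    apply ENNReal.ofReal_le_ofReal
    apply le_of_eq
    rw [mul_pow, div_eq_mul_inv, pow_succ, pow_succ]
    ring

/-- Phase-derivative and sublevel measure estimate for the Schrödinger–Schrödinger interaction. -/
theorem stmt_2 (d : ℕ) (hd : 2 ≤ d) :
    ∃ C : ℝ, 0 < C ∧ ∀ (N₃ N₄ : ℝ), 0 < N₃ → 0 < N₄ → 2 * N₃ ≤ N₄ →
      ∀ (ξ : EuclideanSpace ℝ (Fin (d - 1))) (τ ξ' lbar : ℝ), 0 < lbar →
        ∀ i : Fin (d - 1),
          (∀ ξ₃ : EuclideanSpace ℝ (Fin (d - 1)), ‖ξ₃‖ ≤ N₃ → N₄ ≤ |(ξ - ξ₃) i| →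
            N₄ ≤ |(-2) * (ξ - ξ₃) i + 2 * ξ₃ i|) ∧
          volume {ξ₃ : EuclideanSpace ℝ (Fin (d - 1)) |
              |τ + ‖ξ - ξ₃‖ ^ 2 + ‖ξ₃‖ ^ 2 + ξ'| ≤ lbar ∧ ‖ξ₃‖ ≤ N₃ ∧ N₄ ≤ |(ξ - ξ₃) i|} ≤
            ENNReal.ofReal (C * N₄⁻¹ * N₃ ^ (d - 2) * lbar) := by
  obtain ⟨m, rfl⟩ : ∃ m, d = m + 2 := ⟨d - 2, by omega⟩
  have e1 : m + 2 - 1 = m + 1 := by omega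
  have e2 : m + 2 - 2 = m := by omega
  rw [e1, e2]
  exact main_aux m
end

section
/- Let φ : ℝ → ℝ be differentiable with |φ'(x)| ≥ K > 0 for all x in an interval I. Then for any λ > 0, the Lebesgue measure of { x ∈ I : |φ(x)| ≤ λ } is at most 4λ/K. -/
open MeasureTheory

/-- Sublevel-set estimate: a function with derivative bounded below in absolute
value on an interval spends little time near zero. -/
theorem stmt_4 (φ φ' : ℝ → ℝ) (I : Set ℝ) (hI : I.OrdConnected) (K : ℝ) (hK : 0 < K)
    (hdiff : ∀ x ∈ I, HasDerivAt φ (φ' x) x) (hder : ∀ x ∈ I, K ≤ |φ' x|)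
    (lam : ℝ) (hlam : 0 < lam) :
    volume {x ∈ I | |φ x| ≤ lam} ≤ ENNReal.ofReal (4 * lam / K) := by
  set S : Set ℝ := {x ∈ I | |φ x| ≤ lam} with hS
  -- any two points of S are within 2λ/K
  have key : ∀ a ∈ S, ∀ b ∈ S, a < b → b - a ≤ 2 * lam / K := by
    intro a ha b hb hab
    have hsub : Set.Icc a b ⊆ I := hI.out ha.1 hb.1
    have hcont : ContinuousOn φ (Set.Icc a b) := fun x hx =>
      ((hdiff x (hsub hx)).continuousAt).continuousWithinAt
    obtain ⟨c, hc, hslope⟩ := exists_hasDerivAt_eq_slope φ φ' hab hcont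
      (fun x hx => hdiff x (hsub (Set.Ioo_subset_Icc_self hx)))
    have hcI : c ∈ I := hsub (Set.Ioo_subset_Icc_self hc)
    have h1 : K ≤ |φ b - φ a| / (b - a) := by
      have := hder c hcI
      rw [hslope, abs_div, abs_of_pos (by linarith : (0:ℝ) < b - a)] at this
      exact this
    have h2 : |φ b - φ a| ≤ 2 * lam := by
      have := abs_sub_abs_le_abs_sub (φ b) (φ a)
      calc |φ b - φ a| ≤ |φ b| + |φ a| := abs_sub (φ b) (φ a)
        _ ≤ lam + lam := add_le_add hb.2 ha.2
        _ = 2 * lam := by ring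
    have hba : (0:ℝ) < b - a := by linarith
    have h3 : K * (b - a) ≤ |φ b - φ a| := by
      rw [le_div_iff₀ hba] at h1; linarith
    rw [le_div_iff₀ hK]; nlinarith
  have hdist : ∀ a ∈ S, ∀ b ∈ S, dist a b ≤ 2 * lam / K := by
    intro a ha b hb
    rcases lt_trichotomy a b with h | h | h
    · rw [Real.dist_eq, abs_of_nonpos (by linarith)]
      have := key a ha b hb h; linarith
    · simp [h, dist_self]; positivity
    · rw [Real.dist_eq, abs_of_nonneg (by linarith)]
      exact key b hb a ha h
  have hdiam : EMetric.diam S ≤ ENNReal.ofReal (2 * lam / K) := by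
    apply EMetric.diam_le
    intro a ha b hb
    rw [edist_dist]
    exact ENNReal.ofReal_le_ofReal (hdist a ha b hb)
  calc volume S ≤ EMetric.diam S := Real.volume_le_diam S
    _ ≤ ENNReal.ofReal (2 * lam / K) := hdiam
    _ ≤ ENNReal.ofReal (4 * lam / K) := by
        apply ENNReal.ofReal_le_ofReal
        gcongr
        linarith
end

section
/- Let H be a Hilbert space and let a : ℝ → H be a U²-atom: a = Σ_{k=1}^K 1_{[t_{k-1}, t_k)} φ_{k-1} for a partition −∞ = t₀ < t₁ < ⋯ < t_K = ∞ and vectors φ₀ = 0, φ₁, …, φ_{K-1} ∈ H with Σ_{k=0}^{K-1} ‖φ_k‖_H² = 1. Then the 2-variation of a satisfies ‖a‖_{V²} ≤ 2, where ‖a‖_{V²} is the supremum over finite partitions s₀ < ⋯ < s_M (with the convention a(∞) := 0) of ( Σ_{m=1}^M ‖a(s_m) − a(s_{m-1})‖_H² )^{1/2}. Consequently every u ∈ U² satisfies ‖u‖_{V²} ≤ 2 ‖u‖_{U²} (embedding U² ↪ V²). -/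
open scoped Classical

private lemma stmt12_succ_le_castSucc {K : ℕ} {k k' : Fin K} (h : k < k') :
    (k.succ : Fin (K + 1)) ≤ k'.castSucc := by
  rw [Fin.le_def]
  simp only [Fin.val_succ, Fin.coe_castSucc]
  exact Fin.lt_def.mp h

private lemma stmt12_exists_unique_idx (K : ℕ) (t : Fin (K + 1) → EReal) (ht : StrictMono t)
    (h0 : t 0 = ⊥) (htop : t (Fin.last K) = ⊤) (x : ℝ) :
    ∃! k : Fin K, t k.castSucc ≤ (x : EReal) ∧ (x : EReal) < t k.succ := by
  classical
  set S : Finset (Fin (K + 1)) := Finset.univ.filter (fun j => t j ≤ (x : EReal)) with hS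
  have h0S : (0 : Fin (K + 1)) ∈ S := by
    simp [hS, h0]
  have hne : S.Nonempty := ⟨0, h0S⟩
  set j : Fin (K + 1) := S.max' hne with hj
  have hjle : t j ≤ (x : EReal) := by
    have h : j ∈ Finset.univ.filter (fun j => t j ≤ (x : EReal)) := S.max'_mem hne
    exact (Finset.mem_filter.mp h).2
  have hjK : (j : ℕ) < K := by
    by_contra h
    have hjval : (j : ℕ) = K := le_antisymm (Nat.lt_succ_iff.mp j.isLt) (le_of_not_gt h)
    have : j = Fin.last K := Fin.ext hjval
    rw [this, htop] at hjle
    exact absurd (lt_of_lt_of_le (EReal.coe_lt_top x) hjle) (lt_irrefl _)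
  refine ⟨⟨(j : ℕ), hjK⟩, ⟨?_, ?_⟩, ?_⟩
  · have : (Fin.castSucc ⟨(j : ℕ), hjK⟩) = j := Fin.ext rfl
    rw [this]; exact hjle
  · by_contra h
    push_neg at h
    have hmem : (Fin.succ ⟨(j : ℕ), hjK⟩) ∈ S := by
      rw [hS, Finset.mem_filter]
      exact ⟨Finset.mem_univ _, h⟩
    have hle := S.le_max' _ hmem
    rw [← hj] at hle
    have h4 := Fin.le_def.mp hle
    simp only [Fin.val_succ] at h4
    omega
  · rintro k' ⟨hk'1, hk'2⟩
    by_contra hne'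
    rcases lt_or_gt_of_ne hne' with hlt | hlt
    · -- k' < k
      have h1 : (k'.succ : Fin (K + 1)) ≤ Fin.castSucc ⟨(j : ℕ), hjK⟩ :=
        stmt12_succ_le_castSucc hlt
      have h2 : t k'.succ ≤ (x : EReal) :=
        le_trans (ht.monotone h1) (by
          have : (Fin.castSucc ⟨(j : ℕ), hjK⟩) = j := Fin.ext rfl
          rw [this]; exact hjle)
      exact absurd hk'2 (not_lt.mpr h2)
    · -- k < k'
      have h1 : ((⟨(j : ℕ), hjK⟩ : Fin K).succ : Fin (K + 1)) ≤ k'.castSucc :=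
        stmt12_succ_le_castSucc hlt
      have h2 : t (Fin.succ ⟨(j : ℕ), hjK⟩) ≤ (x : EReal) :=
        le_trans (ht.monotone h1) hk'1
      -- but succ ⟨j⟩ ∉ S
      have hmem : (Fin.succ ⟨(j : ℕ), hjK⟩) ∈ S := by
        rw [hS, Finset.mem_filter]
        exact ⟨Finset.mem_univ _, h2⟩
      have hle := S.le_max' _ hmem
      rw [← hj] at hle
      have h3 := Fin.le_def.mp hle
      simp only [Fin.val_succ] at h3
      omega

private lemma stmt12_key_sum {H : Type*} [NormedAddCommGroup H] (K M : ℕ)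
    (φ : Fin K → H) (g : Fin (M + 1) → Fin K) (hg : Monotone g) :
    ∑ m : Fin M, ‖φ (g m.succ) - φ (g m.castSucc)‖ ^ 2 ≤ 4 * ∑ k, ‖φ k‖ ^ 2 := by
  classical
  set D : Finset (Fin M) := Finset.univ.filter (fun m => g m.castSucc ≠ g m.succ) with hD
  have hDlt : ∀ m ∈ D, g m.castSucc < g m.succ := by
    intro m hm
    rw [hD, Finset.mem_filter] at hm
    refine lt_of_le_of_ne ?_ hm.2
    exact hg (by rw [Fin.le_def]; simp)
  have hsum : ∑ m : Fin M, ‖φ (g m.succ) - φ (g m.castSucc)‖ ^ 2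
      = ∑ m ∈ D, ‖φ (g m.succ) - φ (g m.castSucc)‖ ^ 2 := by
    rw [hD]
    refine (Finset.sum_filter_of_ne ?_).symm
    intro m _ hm h
    apply hm
    rw [h, sub_self, norm_zero]
    norm_num
  have hterm : ∀ m ∈ D, ‖φ (g m.succ) - φ (g m.castSucc)‖ ^ 2
      ≤ 2 * ‖φ (g m.succ)‖ ^ 2 + 2 * ‖φ (g m.castSucc)‖ ^ 2 := by
    intro m _
    have h1 : ‖φ (g m.succ) - φ (g m.castSucc)‖ ≤ ‖φ (g m.succ)‖ + ‖φ (g m.castSucc)‖ :=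
      norm_sub_le _ _
    have h2 : ‖φ (g m.succ) - φ (g m.castSucc)‖ ^ 2
        ≤ (‖φ (g m.succ)‖ + ‖φ (g m.castSucc)‖) ^ 2 :=
      pow_le_pow_left₀ (norm_nonneg _) h1 2
    nlinarith [sq_nonneg (‖φ (g m.succ)‖ - ‖φ (g m.castSucc)‖)]
  have hinj1 : Set.InjOn (fun m : Fin M => g m.succ) D := by
    intro m hm m' hm' h
    by_contra hne
    rcases lt_or_gt_of_ne hne with hlt | hlt
    · have h1 : g m.succ ≤ g m'.castSucc := hg (stmt12_succ_le_castSucc hlt)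
      have h2 := hDlt m' hm'
      simp only at h
      rw [h] at h1
      exact absurd (lt_of_lt_of_le h2 h1) (lt_irrefl _)
    · have h1 : g m'.succ ≤ g m.castSucc := hg (stmt12_succ_le_castSucc hlt)
      have h2 := hDlt m hm
      simp only at h
      rw [← h] at h1
      exact absurd (lt_of_lt_of_le h2 h1) (lt_irrefl _)
  have hinj2 : Set.InjOn (fun m : Fin M => g m.castSucc) D := by
    intro m hm m' hm' h
    by_contra hne
    rcases lt_or_gt_of_ne hne with hlt | hlt
    · have h1 : g m.succ ≤ g m'.castSucc := hg (stmt12_succ_le_castSucc hlt)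
      have h2 := hDlt m hm
      simp only at h
      rw [← h] at h1
      exact absurd (lt_of_lt_of_le h2 h1) (lt_irrefl _)
    · have h1 : g m'.succ ≤ g m.castSucc := hg (stmt12_succ_le_castSucc hlt)
      have h2 := hDlt m' hm'
      simp only at h
      rw [h] at h1
      exact absurd (lt_of_lt_of_le h2 h1) (lt_irrefl _)
  have hb1 : ∑ m ∈ D, ‖φ (g m.succ)‖ ^ 2 ≤ ∑ k, ‖φ k‖ ^ 2 := by
    rw [← Finset.sum_image (f := fun k => ‖φ k‖ ^ 2) (fun m hm m' hm' h => hinj1 hm hm' h)]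
    exact Finset.sum_le_sum_of_subset_of_nonneg (Finset.subset_univ _)
      (fun k _ _ => by positivity)
  have hb2 : ∑ m ∈ D, ‖φ (g m.castSucc)‖ ^ 2 ≤ ∑ k, ‖φ k‖ ^ 2 := by
    rw [← Finset.sum_image (f := fun k => ‖φ k‖ ^ 2) (fun m hm m' hm' h => hinj2 hm hm' h)]
    exact Finset.sum_le_sum_of_subset_of_nonneg (Finset.subset_univ _)
      (fun k _ _ => by positivity)
  calc ∑ m : Fin M, ‖φ (g m.succ) - φ (g m.castSucc)‖ ^ 2
      = ∑ m ∈ D, ‖φ (g m.succ) - φ (g m.castSucc)‖ ^ 2 := hsum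
    _ ≤ ∑ m ∈ D, (2 * ‖φ (g m.succ)‖ ^ 2 + 2 * ‖φ (g m.castSucc)‖ ^ 2) :=
        Finset.sum_le_sum hterm
    _ = 2 * ∑ m ∈ D, ‖φ (g m.succ)‖ ^ 2 + 2 * ∑ m ∈ D, ‖φ (g m.castSucc)‖ ^ 2 := by
        rw [Finset.sum_add_distrib, Finset.mul_sum, Finset.mul_sum]
    _ ≤ 2 * ∑ k, ‖φ k‖ ^ 2 + 2 * ∑ k, ‖φ k‖ ^ 2 := by
        gcongr
    _ = 4 * ∑ k, ‖φ k‖ ^ 2 := by ring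

/-- A `U²`-atom has 2-variation at most 2 (hence `U² ↪ V²`). The atom is the step
function equal to `φ k` on `[t k, t (k+1))`, for a partition `−∞ = t 0 < ⋯ < t K = ∞`,
with `φ 0 = 0` and `∑ ‖φ k‖² = 1`. -/
theorem stmt_12 {H : Type*} [NormedAddCommGroup H] [InnerProductSpace ℝ H] [CompleteSpace H]
    (K : ℕ) (hK : 1 ≤ K) (t : Fin (K + 1) → EReal) (ht : StrictMono t)
    (h0 : t 0 = ⊥) (htop : t (Fin.last K) = ⊤)
    (φ : Fin K → H) (hφ0 : φ ⟨0, hK⟩ = 0) (hnorm : ∑ k : Fin K, ‖φ k‖ ^ 2 = 1) :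
    let a : ℝ → H := fun x =>
      ∑ k : Fin K,
        if t k.castSucc ≤ ((x : ℝ) : EReal) ∧ ((x : ℝ) : EReal) < t k.succ then φ k else 0
    ∀ (M : ℕ) (s : Fin (M + 1) → ℝ), StrictMono s →
      Real.sqrt (∑ m : Fin M, ‖a (s m.succ) - a (s m.castSucc)‖ ^ 2) ≤ 2 := by
  intro a M s hs
  classical
  choose f hf huniq using stmt12_exists_unique_idx K t ht h0 htop
  have ha : ∀ x : ℝ, a x = φ (f x) := by
    intro x
    show (∑ k : Fin K,
        if t k.castSucc ≤ ((x : ℝ) : EReal) ∧ ((x : ℝ) : EReal) < t k.succ then φ k else 0)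
      = φ (f x)
    rw [Finset.sum_eq_single_of_mem (f x) (Finset.mem_univ _)
      (fun k _ hk => if_neg (fun hPk => hk (huniq x k hPk)))]
    exact if_pos (hf x)
  have hgmono : Monotone (fun m : Fin (M + 1) => f (s m)) := by
    intro m m' hmm'
    by_contra h
    push_neg at h
    have h1 : ((f (s m')).succ : Fin (K + 1)) ≤ (f (s m)).castSucc :=
      stmt12_succ_le_castSucc h
    have h2 : t (f (s m')).succ ≤ t (f (s m)).castSucc := ht.monotone h1
    have h3 : t (f (s m)).castSucc ≤ ((s m : ℝ) : EReal) := (hf (s m)).1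
    have h4 : ((s m : ℝ) : EReal) ≤ ((s m' : ℝ) : EReal) :=
      EReal.coe_le_coe_iff.mpr (hs.monotone hmm')
    have h5 : ((s m' : ℝ) : EReal) < t (f (s m')).succ := (hf (s m')).2
    exact absurd (lt_of_lt_of_le h5 (le_trans h2 (le_trans h3 h4))) (lt_irrefl _)
  have hbound : ∑ m : Fin M, ‖a (s m.succ) - a (s m.castSucc)‖ ^ 2 ≤ 4 := by
    have := stmt12_key_sum K M φ (fun m => f (s m)) hgmono
    rw [hnorm, mul_one] at this
    calc ∑ m : Fin M, ‖a (s m.succ) - a (s m.castSucc)‖ ^ 2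
        = ∑ m : Fin M, ‖φ (f (s m.succ)) - φ (f (s m.castSucc))‖ ^ 2 := by
          refine Finset.sum_congr rfl fun m _ => ?_
          rw [ha (s m.succ), ha (s m.castSucc)]
      _ ≤ 4 := this
  calc Real.sqrt (∑ m : Fin M, ‖a (s m.succ) - a (s m.castSucc)‖ ^ 2)
      ≤ Real.sqrt 4 := Real.sqrt_le_sqrt hbound
    _ = 2 := by
        rw [show (4 : ℝ) = 2 ^ 2 by norm_num, Real.sqrt_sq (by norm_num)]
end
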